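/- Let a be a critical element for a symmetric matrix A with similarity layers X_0, ..., X_k rooted at a covering V. If there exist x ∈ X_i and distinct y, z ∈ X_j with i < j and A[x,y] = A[x,z] > A[y,z], then {a, y, z} is a weighted asteroidal triple of A. -/

import Mathlib

/-- The consecutive pairs of `l` avoid `z` with respect to the matrix `A`. -/
def AvoidChain {V : Type*} (A : V → V → ℝ) (z : V) (l : List V) : Prop :=
  l.Chain' fun u w => min (A u z) (A w z) < A u w

/-- `l` is a path from `x` to `y` avoiding `z` in `A`: a sequence of distinct
elements starting at `x`, ending at `y`, each consecutive pair avoiding `z`. -/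
def AvoidPath {V : Type*} (A : V → V → ℝ) (z x y : V) (l : List V) : Prop :=
  l.Nodup ∧ l.head? = some x ∧ l.getLast? = some y ∧ AvoidChain A z l

/-- `x ~^z y`: there is a path from `x` to `y` avoiding `z` in `A`. -/
def Avoids {V : Type*} (A : V → V → ℝ) (z x y : V) : Prop :=
  ∃ l, AvoidPath A z x y l

/-- `{x,y,z}` is a weighted asteroidal triple of `A`. -/
def IsWAT {V : Type*} (A : V → V → ℝ) (x y z : V) : Prop :=
  x ≠ y ∧ y ≠ z ∧ x ≠ z ∧ Avoids A z x y ∧ Avoids A x y z ∧ Avoids A y z x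

/-- `π` is a Robinson ordering of `A`. -/
def IsRobinsonOrdering {V : Type*} [Fintype V] (A : V → V → ℝ)
    (π : Fin (Fintype.card V) ≃ V) : Prop :=
  ∀ i j k : Fin (Fintype.card V), i < j → j < k →
    A (π i) (π k) ≤ min (A (π i) (π j)) (A (π j) (π k))

/-- `A` is Robinsonian: it admits a Robinson ordering. -/
def Robinsonian {V : Type*} [Fintype V] (A : V → V → ℝ) : Prop :=
  ∃ π : Fin (Fintype.card V) ≃ V, IsRobinsonOrdering A π

/-- `S` is strongly homogeneous for `A`. -/
def StronglyHomogeneous {V : Type*} [DecidableEq V] (A : V → V → ℝ) (S : Finset V) : Prop :=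
  ∀ x ∉ S, ∀ y ∈ S, ∀ z ∈ S, A x y = A x z ∧ A x y ≤ A y z

/-- `a` is critical for `A`: between any two distinct elements of `V \ {a}`
there is a path avoiding `a`. -/
def IsCritical {V : Type*} (A : V → V → ℝ) (a : V) : Prop :=
  ∀ x y : V, x ≠ a → y ≠ a → x ≠ y → Avoids A a x y

/-- The similarity layers of `A` rooted at `a`, together with the union of the
layers so far: `(simLayersAux A a n).1` is the `n`-th layer `X_n` and
`(simLayersAux A a n).2 = X_0 ∪ ⋯ ∪ X_n`. -/
def simLayersAux {V : Type*} (A : V → V → ℝ) (a : V) : ℕ → Set V × Set V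
  | 0 => ({a}, {a})
  | n + 1 =>
    let U := (simLayersAux A a n).2
    let L := { y | y ∉ U ∧ ∀ x ∈ U, ∀ z ∉ U, A x z ≤ A x y }
    (L, U ∪ L)

/-- The `n`-th similarity layer `X_n` of `A` rooted at `a`. -/
def simLayer {V : Type*} (A : V → V → ℝ) (a : V) (n : ℕ) : Set V :=
  (simLayersAux A a n).1

/-
Proof idea: write `U_m = X_0 ∪ ⋯ ∪ X_m` (`simLayersUpTo A a m`). If `z ∉ U_m`, every element
of `U_m` is reachable from `a` inside `U_m` by a path avoiding `z`: an element `v` of the layer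
`X_{t+1}` is reached from some `u ∈ U_t` with `A u z < A u v`, for otherwise `z` would dominate
`v` from `U_t` and so lie in `X_{t+1}` itself. With `j = m + 1`, the element `x ∈ X_i ⊆ U_m`
satisfies `A x y = A x z > A y z`, so the step `x → y` avoids `z` and the step `x → z` avoids
`y`; this gives paths `a → y` avoiding `z` and `a → z` avoiding `y`, and criticality of `a`
gives `y → z` avoiding `a`.
-/

theorem Avoids.symm {V : Type*} {A : V → V → ℝ} (hsym : ∀ u v : V, A u v = A v u)
    {z x y : V} (h : Avoids A z x y) : Avoids A z y x := by
  obtain ⟨l, hnd, hh, hl, hc⟩ := h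
  refine ⟨l.reverse, List.nodup_reverse.2 hnd, ?_, ?_, ?_⟩
  · rwa [List.head?_reverse]
  · rwa [List.getLast?_reverse]
  · rw [AvoidChain, List.Chain', List.isChain_reverse]
    exact hc.imp fun p q hpq => by rwa [min_comm, hsym q p]

theorem AvoidPath.concat {V : Type*} {A : V → V → ℝ} {z x u v : V} {l : List V}
    (hl : AvoidPath A z x u l) (hv : v ∉ l) (huv : min (A u z) (A v z) < A u v) :
    AvoidPath A z x v (l ++ [v]) := by
  obtain ⟨hnd, hh, hlast, hc⟩ := hl
  have hne : l ≠ [] := by rintro rfl; simp at hh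
  refine ⟨?_, ?_, List.getLast?_concat .., hc.append (List.isChain_singleton v) ?_⟩
  · simpa using hnd.concat hv
  · rw [List.head?_append_of_ne_nil _ hne, hh]
  · intro p hp q hq
    rw [hlast, Option.mem_some_iff] at hp
    rw [List.head?_singleton, Option.mem_some_iff] at hq
    subst hp hq
    exact huv

section SimLayers

variable {V : Type*} {A : V → V → ℝ} {a : V}

def simLayersUpTo (A : V → V → ℝ) (a : V) (n : ℕ) : Set V :=
  (simLayersAux A a n).2

theorem mem_simLayer_succ {n : ℕ} {v : V} :
    v ∈ simLayer A a (n + 1) ↔ v ∉ simLayersUpTo A a n ∧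
      ∀ x ∈ simLayersUpTo A a n, ∀ z ∉ simLayersUpTo A a n, A x z ≤ A x v :=
  Iff.rfl

theorem simLayersUpTo_succ (n : ℕ) :
    simLayersUpTo A a (n + 1) = simLayersUpTo A a n ∪ simLayer A a (n + 1) :=
  rfl

theorem self_mem_simLayersUpTo (n : ℕ) : a ∈ simLayersUpTo A a n := by
  induction n with
  | zero => rfl
  | succ n ih => exact Or.inl ih

theorem simLayersUpTo_mono : Monotone (simLayersUpTo A a) :=
  monotone_nat_of_le_succ fun n => by rw [simLayersUpTo_succ]; exact Set.subset_union_left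

theorem simLayer_subset_simLayersUpTo (n : ℕ) : simLayer A a n ⊆ simLayersUpTo A a n := by
  cases n with
  | zero => exact subset_rfl
  | succ n => rw [simLayersUpTo_succ]; exact Set.subset_union_right

theorem mem_simLayer_succ_of_le {n : ℕ} {v z : V} (hv : v ∈ simLayer A a (n + 1))
    (hz : z ∉ simLayersUpTo A a n) (hvz : ∀ u ∈ simLayersUpTo A a n, A u v ≤ A u z) :
    z ∈ simLayer A a (n + 1) :=
  mem_simLayer_succ.2
    ⟨hz, fun x hx w hw => ((mem_simLayer_succ.1 hv).2 x hx w hw).trans (hvz x hx)⟩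

theorem exists_avoidPath_subset_simLayersUpTo {n : ℕ} {z : V}
    (hz : z ∉ simLayersUpTo A a n) {v : V} (hv : v ∈ simLayersUpTo A a n) :
    ∃ l, AvoidPath A z a v l ∧ ∀ w ∈ l, w ∈ simLayersUpTo A a n := by
  induction n generalizing v with
  | zero =>
    obtain rfl : v = a := hv
    refine ⟨[v], ⟨List.nodup_singleton v, rfl, rfl, List.isChain_singleton v⟩, ?_⟩
    simpa using self_mem_simLayersUpTo 0
  | succ n ih =>
    have hzn : z ∉ simLayersUpTo A a n := fun h => hz (simLayersUpTo_mono n.le_succ h)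
    rw [simLayersUpTo_succ] at hv hz ⊢
    rcases hv with hv | hv
    · obtain ⟨l, hl, hsub⟩ := ih hzn hv
      exact ⟨l, hl, fun w hw => Or.inl (hsub w hw)⟩
    obtain ⟨u, hu, huz⟩ : ∃ u ∈ simLayersUpTo A a n, A u z < A u v := by
      by_contra! h
      exact hz (Or.inr (mem_simLayer_succ_of_le hv hzn h))
    obtain ⟨l, hl, hsub⟩ := ih hzn hu
    have hvl : v ∉ l := fun h => (mem_simLayer_succ.1 hv).1 (hsub v h)
    refine ⟨l ++ [v], hl.concat hvl (min_lt_of_left_lt huz), fun w hw => ?_⟩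
    rcases List.mem_append.1 hw with hw | hw
    · exact Or.inl (hsub w hw)
    · exact Or.inr (List.mem_singleton.1 hw ▸ hv)

theorem avoids_of_mem_simLayersUpTo {n : ℕ} {x y z : V} (hx : x ∈ simLayersUpTo A a n)
    (hy : y ∉ simLayersUpTo A a n) (hz : z ∉ simLayersUpTo A a n)
    (hxy : min (A x z) (A y z) < A x y) : Avoids A z a y := by
  obtain ⟨l, hl, hsub⟩ := exists_avoidPath_subset_simLayersUpTo hz hx
  exact ⟨l ++ [y], hl.concat (fun h => hy (hsub y h)) hxy⟩

end SimLayers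

theorem stmt_13_general {V : Type*} (A : V → V → ℝ)
    (hsym : ∀ u v : V, A u v = A v u)
    (a : V) (ha : IsCritical A a)
    (i j : ℕ) (hij : i < j) (x y z : V)
    (hx : x ∈ simLayer A a i) (hy : y ∈ simLayer A a j) (hz : z ∈ simLayer A a j)
    (hyz : y ≠ z)
    (h1 : A x y = A x z) (h2 : A x z > A y z) :
    IsWAT A a y z := by
  obtain ⟨m, rfl⟩ : ∃ m, j = m + 1 := Nat.exists_eq_add_one.2 (i.zero_le.trans_lt hij)
  have hxU : x ∈ simLayersUpTo A a m :=
    simLayersUpTo_mono (Nat.lt_succ_iff.1 hij) (simLayer_subset_simLayersUpTo i hx)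
  have hyU := (mem_simLayer_succ.1 hy).1
  have hzU := (mem_simLayer_succ.1 hz).1
  have hay : a ≠ y := fun h => hyU (h ▸ self_mem_simLayersUpTo m)
  have haz : a ≠ z := fun h => hzU (h ▸ self_mem_simLayersUpTo m)
  refine ⟨hay, hyz, haz, ?_, ha y z hay.symm haz.symm hyz, ?_⟩
  · exact avoids_of_mem_simLayersUpTo hxU hyU hzU (by rw [h1]; exact min_lt_of_right_lt h2)
  · refine (avoids_of_mem_simLayersUpTo hxU hzU hyU ?_).symm hsym
    rw [hsym z y, ← h1]
    exact min_lt_of_right_lt (h1 ▸ h2)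

theorem stmt_13 {V : Type*} (A : V → V → ℝ)
    (hsym : ∀ u v : V, A u v = A v u)
    (a : V) (ha : IsCritical A a) (k : ℕ)
    (hcov : ∀ v : V, ∃ i ≤ k, v ∈ simLayer A a i)
    (i j : ℕ) (hij : i < j) (x y z : V)
    (hx : x ∈ simLayer A a i) (hy : y ∈ simLayer A a j) (hz : z ∈ simLayer A a j)
    (hyz : y ≠ z)
    (h1 : A x y = A x z) (h2 : A x z > A y z) :
    IsWAT A a y z :=
  stmt_13_general A hsym a ha i j hij x y z hx hy hz hyz h1 h2
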